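/- arXiv:2105.08102 — 4 statements merged into one kernel-verified Lean document; each statement's English description precedes it below -/
import Mathlib

section
/- Four pairwise distinct complex numbers x₁, x₂, x₃, x₄ are concircular or collinear if and only if their cross ratio ((x₁ - x₂)(x₃ - x₄)) / ((x₂ - x₃)(x₄ - x₁)) is real. -/
open Complex

lemma collinear3_iff (a b c : ℂ) (hab : b ≠ a) :
    Collinear ℝ ({a, b, c} : Set ℂ) ↔ ((c - a)/(b - a)).im = 0 := by
  have hba : b - a ≠ 0 := sub_ne_zero.mpr hab
  constructor
  · intro h
    obtain ⟨v, hv⟩ := (collinear_iff_of_mem (by simp : a ∈ ({a,b,c} : Set ℂ))).mp h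
    obtain ⟨tb, htb⟩ := hv b (by simp)
    obtain ⟨tc, htc⟩ := hv c (by simp)
    have hb : b - a = (tb:ℂ) * v := by
      rw [htb]; simp [vadd_eq_add, Complex.real_smul]
    have hc : c - a = (tc:ℂ) * v := by
      rw [htc]; simp [vadd_eq_add, Complex.real_smul]
    have hv0 : v ≠ 0 := by rintro rfl; simp at hb; exact hba (by simp [hb])
    rw [hc, hb, mul_div_mul_right _ _ hv0]
    rw [show ((tc:ℂ)/(tb:ℂ)) = ((tc/tb : ℝ) : ℂ) by push_cast; ring]
    simp
  · intro h
    have hrc : ((c - a)/(b - a)) = (((c - a)/(b - a)).re : ℂ) := by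
      apply Complex.ext <;> simp [h]
    have hc : c - a = (((c - a)/(b - a)).re : ℂ) * (b - a) := by
      rw [← hrc, div_mul_cancel₀ _ hba]
    rw [collinear_iff_of_mem (by simp : a ∈ ({a,b,c} : Set ℂ))]
    refine ⟨b - a, ?_⟩
    rintro p hp
    simp only [Set.mem_insert_iff, Set.mem_singleton_iff] at hp
    rcases hp with rfl | rfl | rfl
    · exact ⟨0, by simp⟩
    · exact ⟨1, by simp⟩
    · exact ⟨((p - a)/(b - a)).re, by
        rw [vadd_eq_add, Complex.real_smul, ← hc]; ring⟩

lemma circle_cr_real (x₁ x₂ x₃ x₄ c : ℂ) (r : ℝ) (hr : 0 < r)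
    (h1 : ‖x₁ - c‖ = r) (h2 : ‖x₂ - c‖ = r)
    (h3 : ‖x₃ - c‖ = r) (h4 : ‖x₄ - c‖ = r)
    (h23 : x₂ ≠ x₃) (h41 : x₄ ≠ x₁) :
    (((x₁ - x₂) * (x₃ - x₄)) / ((x₂ - x₃) * (x₄ - x₁))).im = 0 := by
  have hy : ∀ x : ℂ, ‖x - c‖ = r → x - c ≠ 0 := fun x hx h0 => by
    rw [h0] at hx; simp at hx; linarith
  have hy1 := hy _ h1; have hy2 := hy _ h2; have hy3 := hy _ h3; have hy4 := hy _ h4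
  have hconj : ∀ x : ℂ, ‖x - c‖ = r →
      (starRingEnd ℂ) x = (starRingEnd ℂ) c + ((r:ℂ)^2) / (x - c) := by
    intro x hx
    have hx0 : x - c ≠ 0 := hy _ hx
    have : (x - c) * (starRingEnd ℂ) (x - c) = ((r:ℝ)^2 : ℝ) := by
      rw [Complex.mul_conj, ← Complex.sq_norm, hx]
    field_simp
    rw [map_sub] at this
    push_cast at this ⊢
    linear_combination this
  have hB : (x₂ - x₃) * (x₄ - x₁) ≠ 0 :=
    mul_ne_zero (sub_ne_zero.mpr h23) (sub_ne_zero.mpr h41)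
  have hB' : (starRingEnd ℂ) ((x₂ - x₃) * (x₄ - x₁)) ≠ 0 :=
    (map_ne_zero (starRingEnd ℂ)).mpr hB
  rw [← Complex.conj_eq_iff_im, map_div₀, div_eq_div_iff hB' hB]
  rw [map_mul, map_mul, map_sub, map_sub, map_sub, map_sub,
    hconj _ h1, hconj _ h2, hconj _ h3, hconj _ h4]
  field_simp
  ring

lemma collinear_cr_real (x₁ x₂ x₃ x₄ : ℂ) (h23 : x₂ ≠ x₃) (h41 : x₄ ≠ x₁)
    (h : Collinear ℝ ({x₁, x₂, x₃, x₄} : Set ℂ)) :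
    (((x₁ - x₂) * (x₃ - x₄)) / ((x₂ - x₃) * (x₄ - x₁))).im = 0 := by
  obtain ⟨v, hv⟩ := (collinear_iff_of_mem
    (by simp : x₁ ∈ ({x₁, x₂, x₃, x₄} : Set ℂ))).mp h
  obtain ⟨t₂, ht₂⟩ := hv x₂ (by simp)
  obtain ⟨t₃, ht₃⟩ := hv x₃ (by simp)
  obtain ⟨t₄, ht₄⟩ := hv x₄ (by simp)
  have d12 : x₁ - x₂ = ((-t₂ : ℝ) : ℂ) * v := by
    rw [ht₂]; push_cast [vadd_eq_add, Complex.real_smul]; ring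
  have d34 : x₃ - x₄ = ((t₃ - t₄ : ℝ) : ℂ) * v := by
    rw [ht₃, ht₄]; push_cast [vadd_eq_add, Complex.real_smul]; ring
  have d23 : x₂ - x₃ = ((t₂ - t₃ : ℝ) : ℂ) * v := by
    rw [ht₂, ht₃]; push_cast [vadd_eq_add, Complex.real_smul]; ring
  have d41 : x₄ - x₁ = ((t₄ : ℝ) : ℂ) * v := by
    rw [ht₄]; push_cast [vadd_eq_add, Complex.real_smul]; ring
  have hv0 : v ≠ 0 := by
    rintro rfl
    apply h23
    rw [ht₂, ht₃]; simp
  have hd : x₂ - x₃ ≠ 0 := sub_ne_zero.mpr h23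
  have ht23 : (t₂ - t₃ : ℝ) ≠ 0 := by
    intro h0; rw [d23, h0] at hd; simp at hd
  have hd' : x₄ - x₁ ≠ 0 := sub_ne_zero.mpr h41
  have ht4 : (t₄ : ℝ) ≠ 0 := by
    intro h0; rw [d41, h0] at hd'; simp at hd'
  have key : ((-t₂ : ℝ) : ℂ) * v * (((t₃ - t₄ : ℝ) : ℂ) * v) /
      (((t₂ - t₃ : ℝ) : ℂ) * v * (((t₄ : ℝ) : ℂ) * v)) =
      (((-t₂) * (t₃ - t₄) / ((t₂ - t₃) * t₄) : ℝ) : ℂ) := by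
    have c23 : ((t₂:ℂ) - t₃) ≠ 0 := by
      intro h0; apply ht23; exact_mod_cast h0
    have c4 : ((t₄:ℂ)) ≠ 0 := by exact_mod_cast ht4
    push_cast
    field_simp
  rw [d12, d34, d23, d41, key, Complex.ofReal_im]

lemma R1 (x₁ x₂ x₃ x₄ : ℂ)
    (h12 : x₁ ≠ x₂) (h13 : x₁ ≠ x₃) (h14 : x₁ ≠ x₄) (h23 : x₂ ≠ x₃)
    (hcol : Collinear ℝ ({x₁, x₂, x₃} : Set ℂ))
    (hcr : (((x₁ - x₂) * (x₃ - x₄)) / ((x₂ - x₃) * (x₄ - x₁))).im = 0) :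
    Collinear ℝ ({x₁, x₂, x₃, x₄} : Set ℂ) := by
  have hz : x₂ - x₁ ≠ 0 := sub_ne_zero.mpr (Ne.symm h12)
  have him3 := (collinear3_iff x₁ x₂ x₃ (Ne.symm h12)).mp hcol
  set b : ℝ := ((x₃ - x₁)/(x₂ - x₁)).re with hbdef
  have hb : x₃ - x₁ = (b:ℂ) * (x₂ - x₁) := by
    have : (x₃ - x₁)/(x₂ - x₁) = (b:ℂ) := by
      apply Complex.ext <;> simp [him3, hbdef]
    rw [← this, div_mul_cancel₀ _ hz]
  have hb0 : b ≠ 0 := by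
    intro h0; rw [h0] at hb; simp at hb
    exact h13 (by linear_combination -hb)
  set K : ℝ := (((x₁ - x₂) * (x₃ - x₄)) / ((x₂ - x₃) * (x₄ - x₁))).re with hKdef
  have hden : (x₂ - x₃) * (x₄ - x₁) ≠ 0 :=
    mul_ne_zero (sub_ne_zero.mpr h23) (sub_ne_zero.mpr (Ne.symm h14))
  have hE : (x₁ - x₂) * (x₃ - x₄) = (K:ℂ) * ((x₂ - x₃) * (x₄ - x₁)) := by
    have : ((x₁ - x₂) * (x₃ - x₄)) / ((x₂ - x₃) * (x₄ - x₁)) = (K:ℂ) := by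
      apply Complex.ext <;> simp [hcr, hKdef]
    rw [div_eq_iff hden] at this
    exact this
  set m : ℝ := K * (1 - b) - 1 with hmdef
  have hfac : (x₂ - x₁) * ((m:ℂ) * (x₄ - x₁) + (b:ℂ) * (x₂ - x₁)) = 0 := by
    push_cast [hmdef]
    linear_combination -hE + ((K:ℂ)*(x₄ - x₁) - (x₂ - x₁)) * hb
  have hfac2 : (m:ℂ) * (x₄ - x₁) = -(b:ℂ) * (x₂ - x₁) := by
    rcases mul_eq_zero.mp hfac with h | h
    · exact absurd h hz
    · linear_combination h
  have hm0 : m ≠ 0 := by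
    intro h0
    rw [h0] at hfac2
    simp at hfac2
    rcases hfac2 with h | h
    · exact hb0 h
    · exact hz h
  have hw : x₄ - x₁ = ((-b/m : ℝ):ℂ) * (x₂ - x₁) := by
    have hmc : (m:ℂ) ≠ 0 := by exact_mod_cast hm0
    push_cast
    field_simp
    linear_combination hfac2
  rw [collinear_iff_of_mem (by simp : x₁ ∈ ({x₁,x₂,x₃,x₄} : Set ℂ))]
  refine ⟨x₂ - x₁, fun p hp => ?_⟩
  simp only [Set.mem_insert_iff, Set.mem_singleton_iff] at hp
  rcases hp with rfl | rfl | rfl | rfl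
  · exact ⟨0, by simp⟩
  · exact ⟨1, by simp [vadd_eq_add]⟩
  · exact ⟨b, by rw [vadd_eq_add, Complex.real_smul, ← hb]; ring⟩
  · exact ⟨-b/m, by rw [vadd_eq_add, Complex.real_smul, ← hw]; ring⟩

lemma fourth_on_circle (y₁ y₂ y₃ y₄ v₁ v₂ v₃ q s : ℂ)
    (hy1 : y₁ ≠ 0) (hy2 : y₂ ≠ 0) (hy3 : y₃ ≠ 0) (hs : s ≠ 0)
    (h12 : y₁ ≠ y₂) (h32 : y₃ ≠ y₂) (h13 : y₁ ≠ y₃)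
    (h1 : v₁ = s * y₁⁻¹) (h2 : v₂ = s * y₂⁻¹) (h3 : v₃ = s * y₃⁻¹)
    (E : (v₁-v₂)*(v₃-q)*((y₂-y₃)*(y₄-y₁)) = (y₁-y₂)*(y₃-y₄)*((v₂-v₃)*(q-v₁))) :
    q * y₄ = s := by
  rw [h1, h2, h3] at E
  field_simp at E
  have hC : s*y₁*y₂*y₃*(y₁-y₂)*(y₃-y₂)*(y₁-y₃) ≠ 0 := by
    apply_rules [mul_ne_zero, sub_ne_zero.mpr]
  refine mul_left_cancel₀ hC ?_
  linear_combination (s*y₁*y₂*y₃) * E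

lemma circumcenter_eq (x y u w N D Nc : ℂ) (hD : D ≠ 0)
    (hid : (x*D - N)*(u*(-D) - Nc) = (y*D - N)*(w*(-D) - Nc)) :
    (x - N/D)*(u - Nc/(-D)) = (y - N/D)*(w - Nc/(-D)) := by
  have hDn : -D ≠ 0 := neg_ne_zero.mpr hD
  field_simp
  linear_combination -hid

lemma R2 (x₁ x₂ x₃ x₄ : ℂ) (h12 : x₁ ≠ x₂) (h13 : x₁ ≠ x₃) (h14 : x₁ ≠ x₄)
    (h23 : x₂ ≠ x₃) (h24 : x₂ ≠ x₄) (h34 : x₃ ≠ x₄)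
    (hncol : ¬Collinear ℝ ({x₁, x₂, x₃} : Set ℂ))
    (hcr : (((x₁ - x₂) * (x₃ - x₄)) / ((x₂ - x₃) * (x₄ - x₁))).im = 0) :
    ∃ (c : ℂ) (r : ℝ), 0 < r ∧ ‖x₁ - c‖ = r ∧ ‖x₂ - c‖ = r ∧
      ‖x₃ - c‖ = r ∧ ‖x₄ - c‖ = r := by
  have hz : x₂ - x₁ ≠ 0 := sub_ne_zero.mpr (Ne.symm h12)
  have hz' : (starRingEnd ℂ) x₂ - (starRingEnd ℂ) x₁ ≠ 0 := by
    rw [← map_sub]; exact (map_ne_zero (starRingEnd ℂ)).mpr hz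
  have hD : (starRingEnd ℂ) x₁*(x₂-x₃) + (starRingEnd ℂ) x₂*(x₃-x₁)
      + (starRingEnd ℂ) x₃*(x₁-x₂) ≠ 0 := by
    intro h0
    apply hncol
    rw [collinear3_iff x₁ x₂ x₃ (Ne.symm h12), ← Complex.conj_eq_iff_im, map_div₀,
      map_sub, map_sub, div_eq_div_iff hz' hz]
    linear_combination -h0
  set c : ℂ := ((starRingEnd ℂ) x₁*x₁*(x₂-x₃) + (starRingEnd ℂ) x₂*x₂*(x₃-x₁)
      + (starRingEnd ℂ) x₃*x₃*(x₁-x₂)) /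
      ((starRingEnd ℂ) x₁*(x₂-x₃) + (starRingEnd ℂ) x₂*(x₃-x₁)
      + (starRingEnd ℂ) x₃*(x₁-x₂)) with hcdef
  have hcconj : (starRingEnd ℂ) c =
      (x₁*(starRingEnd ℂ) x₁*((starRingEnd ℂ) x₂-(starRingEnd ℂ) x₃)
      + x₂*(starRingEnd ℂ) x₂*((starRingEnd ℂ) x₃-(starRingEnd ℂ) x₁)
      + x₃*(starRingEnd ℂ) x₃*((starRingEnd ℂ) x₁-(starRingEnd ℂ) x₂)) /
      (-((starRingEnd ℂ) x₁*(x₂-x₃) + (starRingEnd ℂ) x₂*(x₃-x₁)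
      + (starRingEnd ℂ) x₃*(x₁-x₂))) := by
    rw [hcdef, map_div₀]
    congr 1
    · simp only [map_add, map_mul, map_sub, Complex.conj_conj]
    · simp only [map_add, map_mul, map_sub, Complex.conj_conj]; ring
  have hDn : -((starRingEnd ℂ) x₁*(x₂-x₃) + (starRingEnd ℂ) x₂*(x₃-x₁)
      + (starRingEnd ℂ) x₃*(x₁-x₂)) ≠ 0 := neg_ne_zero.mpr hD
  have p12 : (x₁ - c) * (starRingEnd ℂ) (x₁ - c) = (x₂ - c) * (starRingEnd ℂ) (x₂ - c) := by
    rw [map_sub, map_sub, hcconj, hcdef]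
    exact circumcenter_eq _ _ _ _ _ _ _ hD (by ring)
  have p13 : (x₁ - c) * (starRingEnd ℂ) (x₁ - c) = (x₃ - c) * (starRingEnd ℂ) (x₃ - c) := by
    rw [map_sub, map_sub, hcconj, hcdef]
    exact circumcenter_eq _ _ _ _ _ _ _ hD (by ring)
  have n12 : normSq (x₁ - c) = normSq (x₂ - c) := by
    have := p12
    rw [Complex.mul_conj, Complex.mul_conj] at this
    exact_mod_cast this
  have n13 : normSq (x₁ - c) = normSq (x₃ - c) := by
    have := p13
    rw [Complex.mul_conj, Complex.mul_conj] at this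
    exact_mod_cast this
  set r : ℝ := ‖x₁ - c‖ with hrdef
  have a2 : ‖x₂ - c‖ = r := by
    rw [hrdef, Complex.norm_def, Complex.norm_def, n12]
  have a3 : ‖x₃ - c‖ = r := by
    rw [hrdef, Complex.norm_def, Complex.norm_def, n13]
  have h1c : x₁ - c ≠ 0 := by
    intro h
    apply h12
    have h2c : normSq (x₂ - c) = 0 := by rw [← n12, h]; simp
    have : x₂ - c = 0 := by
      rwa [Complex.normSq_eq_zero] at h2c
    rw [sub_eq_zero] at h this
    rw [h, this]
  have hr : 0 < r := by
    rw [hrdef]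
    exact norm_pos_iff.mpr h1c
  have h2c : x₂ - c ≠ 0 := by
    intro h; rw [h] at a2; simp at a2; linarith
  have h3c : x₃ - c ≠ 0 := by
    intro h; rw [h] at a3; simp at a3; linarith
  have hs : ((r^2 : ℝ) : ℂ) ≠ 0 := by
    simp only [ne_eq, Complex.ofReal_eq_zero]
    positivity
  -- conj relations
  have hv : ∀ x : ℂ, x - c ≠ 0 → ‖x - c‖ = r →
      (starRingEnd ℂ) (x - c) = ((r^2 : ℝ) : ℂ) * (x - c)⁻¹ := by
    intro x hx0 hxa
    rw [eq_mul_inv_iff_mul_eq₀ hx0]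
    rw [mul_comm, Complex.mul_conj, ← Complex.sq_norm, hxa]
  -- cross-multiplied conjugate equation
  have hBy : (x₂ - x₃) * (x₄ - x₁) ≠ 0 :=
    mul_ne_zero (sub_ne_zero.mpr h23) (sub_ne_zero.mpr (Ne.symm h14))
  have hBy' : (starRingEnd ℂ) ((x₂ - x₃) * (x₄ - x₁)) ≠ 0 :=
    (map_ne_zero (starRingEnd ℂ)).mpr hBy
  have E0 : (starRingEnd ℂ) ((x₁ - x₂) * (x₃ - x₄)) * ((x₂ - x₃) * (x₄ - x₁)) =
      (x₁ - x₂) * (x₃ - x₄) * (starRingEnd ℂ) ((x₂ - x₃) * (x₄ - x₁)) := by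
    rw [← div_eq_div_iff hBy' hBy, ← map_div₀]
    rw [Complex.conj_eq_iff_im]
    exact hcr
  have E : ((starRingEnd ℂ) (x₁ - c) - (starRingEnd ℂ) (x₂ - c)) *
        ((starRingEnd ℂ) (x₃ - c) - (starRingEnd ℂ) (x₄ - c)) *
        (((x₂ - c) - (x₃ - c)) * ((x₄ - c) - (x₁ - c))) =
      ((x₁ - c) - (x₂ - c)) * ((x₃ - c) - (x₄ - c)) *
        (((starRingEnd ℂ) (x₂ - c) - (starRingEnd ℂ) (x₃ - c)) *
          ((starRingEnd ℂ) (x₄ - c) - (starRingEnd ℂ) (x₁ - c))) := by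
    simp only [map_sub, map_mul] at E0 ⊢
    linear_combination E0
  have key : (starRingEnd ℂ) (x₄ - c) * (x₄ - c) = ((r^2 : ℝ) : ℂ) := by
    refine fourth_on_circle (x₁ - c) (x₂ - c) (x₃ - c) (x₄ - c)
      ((starRingEnd ℂ) (x₁ - c)) ((starRingEnd ℂ) (x₂ - c)) ((starRingEnd ℂ) (x₃ - c))
      ((starRingEnd ℂ) (x₄ - c)) ((r^2 : ℝ) : ℂ) h1c h2c h3c hs ?_ ?_ ?_
      (hv _ h1c rfl) (hv _ h2c a2) (hv _ h3c a3) E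
    · simpa [sub_left_inj] using h12
    · simpa [sub_left_inj] using (Ne.symm h23)
    · simpa [sub_left_inj] using h13
  have n4 : normSq (x₄ - c) = r^2 := by
    rw [mul_comm, Complex.mul_conj] at key
    exact_mod_cast key
  have a4 : ‖x₄ - c‖ = r := by
    rw [Complex.norm_def, n4, Real.sqrt_sq hr.le]
  exact ⟨c, r, hr, rfl, a2, a3, a4⟩

/-- Four pairwise distinct complex numbers are concircular or collinear iff their
cross ratio is real. -/
theorem concircular_or_collinear_iff_crossRatio_real (x₁ x₂ x₃ x₄ : ℂ)
    (h12 : x₁ ≠ x₂) (h13 : x₁ ≠ x₃) (h14 : x₁ ≠ x₄)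
    (h23 : x₂ ≠ x₃) (h24 : x₂ ≠ x₄) (h34 : x₃ ≠ x₄) :
    ((∃ (c : ℂ) (r : ℝ), 0 < r ∧ ‖x₁ - c‖ = r ∧ ‖x₂ - c‖ = r ∧
        ‖x₃ - c‖ = r ∧ ‖x₄ - c‖ = r) ∨
      Collinear ℝ ({x₁, x₂, x₃, x₄} : Set ℂ)) ↔
    (((x₁ - x₂) * (x₃ - x₄)) / ((x₂ - x₃) * (x₄ - x₁))).im = 0 := by
  constructor
  · rintro (⟨c, r, hr, hc1, hc2, hc3, hc4⟩ | hcol)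
    · exact circle_cr_real x₁ x₂ x₃ x₄ c r hr hc1 hc2 hc3 hc4 h23 (Ne.symm h14)
    · exact collinear_cr_real x₁ x₂ x₃ x₄ h23 (Ne.symm h14) hcol
  · intro hcr
    by_cases hcol : Collinear ℝ ({x₁, x₂, x₃} : Set ℂ)
    · exact Or.inr (R1 x₁ x₂ x₃ x₄ h12 h13 h14 h23 hcol hcr)
    · exact Or.inl (R2 x₁ x₂ x₃ x₄ h12 h13 h14 h23 h24 h34 hcol hcr)
end

section
/- Let F̃ : ℤ² → ℝ³ be a non-degenerate discrete asymptotic net with Gauss map N, and fix n₀. Suppose all N(m,n₀) lie in a fixed 2-dimensional linear subspace Q with unit normal v. Then every edge vector F̃(m+1,n₀) - F̃(m,n₀) is parallel to v; hence the discrete curve m ↦ F̃(m,n₀) lies on a straight line with direction v. -/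
/-!
The edge `F (m + 1, n₀) - F (m, n₀)` lies in both tangent planes `P (m, n₀)` and `P (m + 1, n₀)`,
so it is orthogonal to `N (m, n₀)` and `N (m + 1, n₀)`. These two normals are linearly
independent: if they were parallel, both tangent planes would coincide and contain the whole
quadrilateral at `(m, n₀)`. In three dimensions the vectors orthogonal to two independent vectors
form a line, and `v` spans it, since it is orthogonal to every normal along the row.
-/

open Module RealInnerProductSpace

section FiniteDimensional

variable {E : Type*} [NormedAddCommGroup E] [InnerProductSpace ℝ E] [FiniteDimensional ℝ E]

theorem coplanar_of_forall_inner_sub_eq_zero (hE : finrank ℝ E = 3) {b p₀ : E} (hb : b ≠ 0)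
    {s : Set E} (hs : ∀ p ∈ s, ⟪b, p - p₀⟫ = 0) : Coplanar ℝ s := by
  have hplane : finrank ℝ (ℝ ∙ b)ᗮ = 2 := by
    have := Submodule.finrank_add_finrank_orthogonal (ℝ ∙ b)
    rw [finrank_span_singleton hb, hE] at this
    omega
  have hsub : s ⊆ AffineSubspace.mk' p₀ (ℝ ∙ b)ᗮ := fun p hp =>
    AffineSubspace.mem_mk'.2 (Submodule.mem_orthogonal_singleton_iff_inner_right.2 (hs p hp))
  rw [coplanar_iff_finrank_le_two, ← hplane]
  exact Submodule.finrank_mono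
    ((vectorSpan_mono ℝ hsub).trans_eq (AffineSubspace.direction_mk' _ _))

theorem exists_eq_smul_of_inner_eq_zero (hE : finrank ℝ E = 3) {a b v x : E}
    (hab : LinearIndependent ℝ ![a, b]) (hv : v ≠ 0)
    (hva : ⟪a, v⟫ = 0) (hvb : ⟪b, v⟫ = 0) (hxa : ⟪a, x⟫ = 0) (hxb : ⟪b, x⟫ = 0) :
    ∃ t : ℝ, x = t • v := by
  set K := (ℝ ∙ a) ⊔ (ℝ ∙ b)
  have hK : finrank ℝ K = 2 := by
    have hspan : K = Submodule.span ℝ (Set.range ![a, b]) := by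
      rw [Matrix.range_cons, Matrix.range_cons, Matrix.range_empty, Set.union_empty,
        Set.union_singleton, Set.pair_comm, Submodule.span_insert]
    rw [hspan, finrank_span_eq_card hab, Fintype.card_fin]
  have hline : finrank ℝ Kᗮ = 1 := by
    have := Submodule.finrank_add_finrank_orthogonal K
    rw [hK, hE] at this
    omega
  have mem_line {y : E} (hya : ⟪a, y⟫ = 0) (hyb : ⟪b, y⟫ = 0) : y ∈ Kᗮ := by
    rw [← Submodule.inf_orthogonal]
    exact ⟨Submodule.mem_orthogonal_singleton_iff_inner_right.2 hya,
      Submodule.mem_orthogonal_singleton_iff_inner_right.2 hyb⟩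
  obtain ⟨t, ht⟩ := (finrank_eq_one_iff_of_nonzero' (⟨v, mem_line hva hvb⟩ : Kᗮ)
    (by simpa using hv)).1 hline ⟨x, mem_line hxa hxb⟩
  exact ⟨t, (congrArg Subtype.val ht).symm⟩

theorem linearIndependent_of_not_coplanar (hE : finrank ℝ E = 3) {a b p₀ p₁ p₂ p₃ : E}
    (ha : a ≠ 0) (hb : b ≠ 0) (h₁ : ⟪b, p₁ - p₀⟫ = 0) (h₂ : ⟪b, p₂ - p₁⟫ = 0)
    (h₃ : ⟪a, p₃ - p₀⟫ = 0) (hnc : ¬ Coplanar ℝ ({p₀, p₁, p₂, p₃} : Set E)) :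
    LinearIndependent ℝ ![a, b] := by
  rw [linearIndependent_fin2]
  refine ⟨by simpa using hb, fun c hc => hnc ?_⟩
  simp only [Matrix.cons_val_one, Matrix.cons_val_zero] at hc
  have hc₀ : c ≠ 0 := by
    rintro rfl
    exact ha (by simpa using hc.symm)
  have h₃' : ⟪b, p₃ - p₀⟫ = 0 := by
    rw [← hc, real_inner_smul_left] at h₃
    exact (mul_eq_zero.1 h₃).resolve_left hc₀
  refine coplanar_of_forall_inner_sub_eq_zero hE hb (p₀ := p₀) ?_
  simp only [Set.mem_insert_iff, Set.mem_singleton_iff]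
  rintro p (rfl | rfl | rfl | rfl)
  · simp
  · exact h₁
  · rw [← sub_add_sub_cancel p p₁ p₀, inner_add_right, h₂, h₁, add_zero]
  · exact h₃'

end FiniteDimensional

/-- If the Gauss map of a non-degenerate discrete asymptotic net along a row lies in a fixed
two-dimensional linear subspace (with unit normal `v`), then the corresponding discrete
asymptotic line is a straight line with direction `v`. -/
theorem straight_asymptotic_line_of_gaussMap_great_circle
    (F N : ℤ × ℤ → EuclideanSpace ℝ (Fin 3))
    (hN : ∀ p, ‖N p‖ = 1)
    (htang : ∀ m n : ℤ,
      (inner ℝ (F (m + 1, n) - F (m, n)) (N (m, n)) : ℝ) = 0 ∧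
      (inner ℝ (F (m - 1, n) - F (m, n)) (N (m, n)) : ℝ) = 0 ∧
      (inner ℝ (F (m, n + 1) - F (m, n)) (N (m, n)) : ℝ) = 0 ∧
      (inner ℝ (F (m, n - 1) - F (m, n)) (N (m, n)) : ℝ) = 0)
    (hnondeg : ∀ m n : ℤ, ¬ Coplanar ℝ
      ({F (m, n), F (m + 1, n), F (m + 1, n + 1), F (m, n + 1)} :
        Set (EuclideanSpace ℝ (Fin 3))))
    (n₀ : ℤ) (v : EuclideanSpace ℝ (Fin 3)) (hv : ‖v‖ = 1)
    (hQ : ∀ m : ℤ, (inner ℝ (N (m, n₀)) v : ℝ) = 0) :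
    ∀ m : ℤ, ∃ t : ℝ, F (m + 1, n₀) - F (m, n₀) = t • v := by
  intro m
  have hE : finrank ℝ (EuclideanSpace ℝ (Fin 3)) = 3 := finrank_euclideanSpace_fin
  have hN₀ (p : ℤ × ℤ) : N p ≠ 0 := norm_ne_zero_iff.1 (by simp [hN p])
  have hv₀ : v ≠ 0 := norm_ne_zero_iff.1 (by simp [hv])
  have hedge : ⟪N (m, n₀), F (m + 1, n₀) - F (m, n₀)⟫ = 0 := by
    rw [real_inner_comm]; exact (htang m n₀).1
  have hedge' : ⟪N (m + 1, n₀), F (m + 1, n₀) - F (m, n₀)⟫ = 0 := by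
    have h := (htang (m + 1) n₀).2.1
    rw [add_sub_cancel_right] at h
    rw [real_inner_comm, ← neg_sub, inner_neg_left, h, neg_zero]
  have hind : LinearIndependent ℝ ![N (m, n₀), N (m + 1, n₀)] := by
    refine linearIndependent_of_not_coplanar hE (hN₀ _) (hN₀ _) hedge' ?_ ?_ (hnondeg m n₀)
    · rw [real_inner_comm]; exact (htang (m + 1) n₀).2.2.1
    · rw [real_inner_comm]; exact (htang m n₀).2.2.1
  exact exists_eq_smul_of_inner_eq_zero hE hind hv₀ (hQ m) (hQ (m + 1)) hedge hedge'
end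

section
/- Let g : ℤ² → ℂ be a discrete holomorphic function with cross ratio factorizing edge labels a_ij, a_il (so cr(g_i,g_j,g_k,g_l) = a_ij/a_il < 0 on each elementary quadrilateral, with g injective on each quadrilateral). Define edge vectors in ℝ³ by dF_ij = a_ij·Re((1 - g_i g_j, i(1 + g_i g_j), g_i + g_j)/(g_j - g_i)) and dF_il = a_il·Re((1 - g_i g_l, i(1 + g_i g_l), g_i + g_l)/(g_l - g_i)). Then these edge vectors are compatible, i.e., on every elementary quadrilateral dF_ij + dF_jk = dF_il + dF_lk, so they integrate to a well-defined net F : ℤ² → ℝ³. -/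
/-- The Weierstrass edge vector of the discrete isothermic minimal net associated to the
edge `(p, q)` of a discrete holomorphic function with edge label `a`. -/
noncomputable def weierstrassEdge (p q : ℂ) (a : ℝ) : Fin 3 → ℝ :=
  fun i => a * (![1 - p * q, Complex.I * (1 + p * q), p + q] i / (q - p)).re

lemma re_comb (a b : ℝ) (u1 u2 u3 u4 : ℂ) (h : (a:ℂ)*u1 + b*u2 = b*u3 + a*u4) :
    a*u1.re + b*u2.re = b*u3.re + a*u4.re := by
  have := congrArg Complex.re h
  simpa [Complex.add_re, Complex.re_ofReal_mul] using this

lemma comp0 (a b : ℝ) (x y z w : ℂ)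
    (hyx : y - x ≠ 0) (hzy : z - y ≠ 0) (hwx : w - x ≠ 0) (hzw : z - w ≠ 0)
    (hyz : y - z ≠ 0)
    (key : (a:ℂ) * ((y-z)*(w-x)) = (b:ℂ) * ((x-y)*(z-w))) :
    (a:ℂ)*((1 - x*y)/(y-x)) + b*((1 - y*z)/(z-y)) =
      b*((1 - x*w)/(w-x)) + a*((1 - w*z)/(z-w)) := by
  have haval : (a:ℂ) = (b:ℂ)*((x-y)*(z-w))/((y-z)*(w-x)) := by
    field_simp; linear_combination key
  rw [haval]; field_simp; ring

lemma comp1 (a b : ℝ) (x y z w : ℂ)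
    (hyx : y - x ≠ 0) (hzy : z - y ≠ 0) (hwx : w - x ≠ 0) (hzw : z - w ≠ 0)
    (hyz : y - z ≠ 0)
    (key : (a:ℂ) * ((y-z)*(w-x)) = (b:ℂ) * ((x-y)*(z-w))) :
    (a:ℂ)*(Complex.I*(1 + x*y)/(y-x)) + b*(Complex.I*(1 + y*z)/(z-y)) =
      b*(Complex.I*(1 + x*w)/(w-x)) + a*(Complex.I*(1 + w*z)/(z-w)) := by
  have haval : (a:ℂ) = (b:ℂ)*((x-y)*(z-w))/((y-z)*(w-x)) := by
    field_simp; linear_combination key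
  rw [haval]; field_simp; ring

lemma comp2 (a b : ℝ) (x y z w : ℂ)
    (hyx : y - x ≠ 0) (hzy : z - y ≠ 0) (hwx : w - x ≠ 0) (hzw : z - w ≠ 0)
    (hyz : y - z ≠ 0)
    (key : (a:ℂ) * ((y-z)*(w-x)) = (b:ℂ) * ((x-y)*(z-w))) :
    (a:ℂ)*((x + y)/(y-x)) + b*((y + z)/(z-y)) =
      b*((x + w)/(w-x)) + a*((w + z)/(z-w)) := by
  have haval : (a:ℂ) = (b:ℂ)*((x-y)*(z-w))/((y-z)*(w-x)) := by
    field_simp; linear_combination key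
  rw [haval]; field_simp; ring

/-- The Weierstrass edge vectors associated to a discrete holomorphic function are
compatible: around every elementary quadrilateral the discrete one-form is closed, so the
edge vectors integrate to a discrete isothermic minimal net. -/
theorem weierstrass_edges_closed (g : ℤ × ℤ → ℂ) (a b : ℤ × ℤ → ℝ)
    (ha : ∀ p : ℤ × ℤ, a p = a (p.1, p.2 + 1))
    (hb : ∀ p : ℤ × ℤ, b p = b (p.1 + 1, p.2))
    (hinj : ∀ m n : ℤ,
      g (m, n) ≠ g (m + 1, n) ∧ g (m, n) ≠ g (m + 1, n + 1) ∧ g (m, n) ≠ g (m, n + 1) ∧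
      g (m + 1, n) ≠ g (m + 1, n + 1) ∧ g (m + 1, n) ≠ g (m, n + 1) ∧
      g (m + 1, n + 1) ≠ g (m, n + 1))
    (hcr : ∀ m n : ℤ,
      ((g (m, n) - g (m + 1, n)) * (g (m + 1, n + 1) - g (m, n + 1))) /
        ((g (m + 1, n) - g (m + 1, n + 1)) * (g (m, n + 1) - g (m, n))) =
      ((a (m, n) / b (m, n) : ℝ) : ℂ))
    (hneg : ∀ p : ℤ × ℤ, a p / b p < 0) :
    ∀ m n : ℤ,
      weierstrassEdge (g (m, n)) (g (m + 1, n)) (a (m, n)) +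
        weierstrassEdge (g (m + 1, n)) (g (m + 1, n + 1)) (b (m + 1, n)) =
      weierstrassEdge (g (m, n)) (g (m, n + 1)) (b (m, n)) +
        weierstrassEdge (g (m, n + 1)) (g (m + 1, n + 1)) (a (m, n + 1)) := by
  intro m n
  have h := hcr m n
  obtain ⟨h1, h2, h3, h4, h5, h6⟩ := hinj m n
  set x := g (m, n)
  set y := g (m + 1, n)
  set z := g (m + 1, n + 1)
  set w := g (m, n + 1)
  have hb0 : b (m, n) ≠ 0 := by
    intro h
    have := hneg (m, n)
    rw [h, div_zero] at this
    exact lt_irrefl 0 this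
  have hyx : y - x ≠ 0 := sub_ne_zero.mpr (Ne.symm h1)
  have hzy : z - y ≠ 0 := sub_ne_zero.mpr (Ne.symm h4)
  have hwx : w - x ≠ 0 := sub_ne_zero.mpr (Ne.symm h3)
  have hzw : z - w ≠ 0 := sub_ne_zero.mpr h6
  have hyz : y - z ≠ 0 := sub_ne_zero.mpr h4
  have hb0c : ((b (m, n) : ℝ) : ℂ) ≠ 0 := by exact_mod_cast hb0
  have key : ((a (m, n) : ℝ) : ℂ) * ((y - z) * (w - x)) =
      ((b (m, n) : ℝ) : ℂ) * ((x - y) * (z - w)) := by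
    rw [div_eq_iff (mul_ne_zero hyz hwx), Complex.ofReal_div, div_mul_eq_mul_div,
      eq_div_iff hb0c] at h
    linear_combination -h
  rw [show b (m + 1, n) = b (m, n) from (hb (m, n)).symm,
    show a (m, n + 1) = a (m, n) from (ha (m, n)).symm]
  funext i
  fin_cases i
  · simpa [weierstrassEdge] using
      re_comb (a (m, n)) (b (m, n)) _ _ _ _
        (comp0 (a (m, n)) (b (m, n)) x y z w hyx hzy hwx hzw hyz key)
  · simpa [weierstrassEdge] using
      re_comb (a (m, n)) (b (m, n)) _ _ _ _
        (comp1 (a (m, n)) (b (m, n)) x y z w hyx hzy hwx hzw hyz key)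
  · simpa [weierstrassEdge] using
      re_comb (a (m, n)) (b (m, n)) _ _ _ _
        (comp2 (a (m, n)) (b (m, n)) x y z w hyx hzy hwx hzw hyz key)
end

section
/- Let g : ℤ² → ℂ be a discrete holomorphic function with edge labels a_ij, a_il, let F be the discrete isothermic minimal net with edge vectors dF_ij = a_ij·Re(V(g_i,g_j)/(g_j-g_i)) and let F̃ be the net with edge vectors dF̃_ij = a_ij·Re(i·V(g_i,g_j)/(g_j-g_i)), where V(p,q) = (1 - pq, i(1 + pq), p + q) ∈ ℂ³. Then every edge vector of F is orthogonal to the vector n(g_i) + n(g_j) where n(z) = (2Re z, 2Im z, |z|² - 1)/(|z|² + 1) is inverse stereographic projection, and likewise every edge vector of F̃ is orthogonal to n(g_i) + n(g_j); i.e., F and F̃ admit the same vertex normals along corresponding edges. -/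
/-- The Weierstrass edge vector of the discrete isothermic minimal net. -/
noncomputable def isoEdge (p q : ℂ) (a : ℝ) : Fin 3 → ℝ :=
  fun i => a * (![1 - p * q, Complex.I * (1 + p * q), p + q] i / (q - p)).re

/-- The Weierstrass edge vector of the conjugate discrete asymptotic minimal net. -/
noncomputable def conjEdge (p q : ℂ) (a : ℝ) : Fin 3 → ℝ :=
  fun i => a * (Complex.I * ![1 - p * q, Complex.I * (1 + p * q), p + q] i / (q - p)).re

/-- Inverse stereographic projection `ℂ → S² ⊂ ℝ³`. -/
noncomputable def invStereo (z : ℂ) : Fin 3 → ℝ :=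
  fun i => ![2 * z.re, 2 * z.im, Complex.normSq z - 1] i / (Complex.normSq z + 1)

/-- Dot product of vectors in `ℝ³`. -/
def dot3 (u v : Fin 3 → ℝ) : ℝ := u 0 * v 0 + u 1 * v 1 + u 2 * v 2

lemma key1 (p q : ℂ) (a : ℝ) (h : q ≠ p) :
    dot3 (isoEdge p q a) (invStereo p + invStereo q) = 0 := by
  have hpq : Complex.normSq (q - p) ≠ 0 := by
    simpa [Complex.normSq_eq_zero, sub_eq_zero] using h
  have hp : Complex.normSq p + 1 ≠ 0 := ne_of_gt (by nlinarith [Complex.normSq_nonneg p])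
  have hq : Complex.normSq q + 1 ≠ 0 := ne_of_gt (by nlinarith [Complex.normSq_nonneg q])
  simp only [dot3, isoEdge, invStereo, Pi.add_apply, Matrix.cons_val_zero,
    Matrix.cons_val_one, Matrix.head_cons, Matrix.cons_val_two, Matrix.tail_cons,
    Complex.div_re, Complex.sub_re, Complex.sub_im, Complex.one_re, Complex.one_im,
    Complex.mul_re, Complex.mul_im, Complex.add_re, Complex.add_im,
    Complex.I_re, Complex.I_im, Complex.normSq_apply] at *
  field_simp
  ring

lemma key2 (p q : ℂ) (a : ℝ) (h : q ≠ p) :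
    dot3 (conjEdge p q a) (invStereo p + invStereo q) = 0 := by
  have hpq : Complex.normSq (q - p) ≠ 0 := by
    simpa [Complex.normSq_eq_zero, sub_eq_zero] using h
  have hp : Complex.normSq p + 1 ≠ 0 := ne_of_gt (by nlinarith [Complex.normSq_nonneg p])
  have hq : Complex.normSq q + 1 ≠ 0 := ne_of_gt (by nlinarith [Complex.normSq_nonneg q])
  simp only [dot3, conjEdge, invStereo, Pi.add_apply, Matrix.cons_val_zero,
    Matrix.cons_val_one, Matrix.head_cons, Matrix.cons_val_two, Matrix.tail_cons,
    Complex.div_re, Complex.sub_re, Complex.sub_im, Complex.one_re, Complex.one_im,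
    Complex.mul_re, Complex.mul_im, Complex.add_re, Complex.add_im,
    Complex.I_re, Complex.I_im, Complex.normSq_apply] at *
  field_simp
  ring

/-- Every edge vector of the discrete isothermic minimal net `F` and of its conjugate `F̃`
built from a discrete holomorphic function `g` is orthogonal to `n(g_i) + n(g_j)`, where
`n` is inverse stereographic projection: `F` and `F̃` share the same vertex normals. -/
theorem conjugate_nets_share_normals (g : ℤ × ℤ → ℂ) (a b : ℤ × ℤ → ℝ)
    (hd1 : ∀ m n : ℤ, g (m + 1, n) ≠ g (m, n))
    (hd2 : ∀ m n : ℤ, g (m, n + 1) ≠ g (m, n)) :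
    ∀ m n : ℤ,
      dot3 (isoEdge (g (m, n)) (g (m + 1, n)) (a (m, n)))
        (invStereo (g (m, n)) + invStereo (g (m + 1, n))) = 0 ∧
      dot3 (conjEdge (g (m, n)) (g (m + 1, n)) (a (m, n)))
        (invStereo (g (m, n)) + invStereo (g (m + 1, n))) = 0 ∧
      dot3 (isoEdge (g (m, n)) (g (m, n + 1)) (b (m, n)))
        (invStereo (g (m, n)) + invStereo (g (m, n + 1))) = 0 ∧
      dot3 (conjEdge (g (m, n)) (g (m, n + 1)) (b (m, n)))
        (invStereo (g (m, n)) + invStereo (g (m, n + 1))) = 0 := by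
  intro m n
  exact ⟨key1 _ _ _ (hd1 m n), key2 _ _ _ (hd1 m n), key1 _ _ _ (hd2 m n), key2 _ _ _ (hd2 m n)⟩
end
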